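/- arXiv:1305.0363 — 3 statements merged into one kernel-verified Lean document; each statement's English description precedes it below -/
import Mathlib

section
/- For integers n1 ≥ 2 and n2 ≥ 4 with n1 − 1 < ⌊n2/2⌋, the metric dimension of the strong product of the path P_{n1} and the cycle C_{n2} satisfies dim(P_{n1} ⊠ C_{n2}) ≤ n2. -/
open SimpleGraph

/-- The strong product of two simple graphs. -/
def strongProd {α β : Type*} (G : SimpleGraph α) (H : SimpleGraph β) :
    SimpleGraph (α × β) where
  Adj x y := x ≠ y ∧ (x.1 = y.1 ∨ G.Adj x.1 y.1) ∧ (x.2 = y.2 ∨ H.Adj x.2 y.2)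
  symm := by
    constructor
    rintro ⟨a, b⟩ ⟨c, d⟩ ⟨hne, h1, h2⟩
    refine ⟨hne.symm, ?_, ?_⟩
    · rcases h1 with h | h
      · exact Or.inl h.symm
      · exact Or.inr h.symm
    · rcases h2 with h | h
      · exact Or.inl h.symm
      · exact Or.inr h.symm
  loopless := by constructor; rintro ⟨a, b⟩ ⟨hne, -, -⟩; exact hne rfl

/-- A set `S` is a metric generator for `G` if every pair of distinct vertices is
distinguished by some element of `S`. -/
def IsMetricGen {α : Type*} (G : SimpleGraph α) (S : Set α) : Prop :=
  ∀ x y : α, x ≠ y → ∃ s ∈ S, G.dist x s ≠ G.dist y s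

/-- The metric dimension of a graph: minimum cardinality of a metric generator. -/
noncomputable def metricDim {α : Type*} (G : SimpleGraph α) : ℕ :=
  sInf {n | ∃ S : Set α, IsMetricGen G S ∧ S.ncard = n}

/-- `G` is self `k`-resolved if for all distinct `x, y` there is `w` such that
`d(y,w) ≥ k` and `x` lies on a shortest `y`–`w` path, or symmetrically. -/
def SelfResolved {α : Type*} (G : SimpleGraph α) (k : ℕ) : Prop :=
  ∀ x y : α, x ≠ y → ∃ w : α,
    (k ≤ G.dist y w ∧ G.dist y x + G.dist x w = G.dist y w) ∨
    (k ≤ G.dist x w ∧ G.dist x y + G.dist y w = G.dist x w)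

/-- Two vertices are true twins if their closed neighborhoods coincide. -/
def TrueTwins {α : Type*} (G : SimpleGraph α) (u v : α) : Prop :=
  insert u (G.neighborSet u) = insert v (G.neighborSet v)

/-- The number of equivalence classes of the true twin relation. -/
noncomputable def numTrueTwinClasses {α : Type*} (G : SimpleGraph α) : ℕ :=
  Nat.card (Quotient (Setoid.ker (fun v => insert v (G.neighborSet v))))

/-! In `P_{n₁} ⊠ C_{n₂}` the distance is `max (|a - c|, d_C(b, d))`. Take as landmarks the end
layer `{0} × C_{n₂}`. Two vertices with the same cycle coordinate `b` are told apart by `(0, b)`, at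
distances `a` and `c`. Otherwise `b ≠ d`, and one of the antipodes `j` of `b` is closer than `⌊n₂/2⌋`
to `d`; since every path vertex is within `n₁ - 1 < ⌊n₂/2⌋` of `0`, the landmark `(0, j)` is at
distance exactly `⌊n₂/2⌋` from `(a, b)` but closer to `(c, d)`. Each distance formula is proved by
exhibiting a labelling that changes by at most one along edges and can be decreased along an edge
from every vertex other than the target. -/

namespace SimpleGraph

variable {α β : Type*} {G : SimpleGraph α} {H : SimpleGraph β}

lemma Walk.le_add_length {g : α → ℕ} (hg : ∀ ⦃x y⦄, G.Adj x y → g x ≤ g y + 1) :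
    ∀ {u v : α} (p : G.Walk u v), g u ≤ g v + p.length
  | _, _, .nil => by simp
  | _, _, .cons h p => by
    have := hg h
    have := Walk.le_add_length hg p
    rw [Walk.length_cons]
    omega

lemma dist_eq_of_lipschitz_of_exists_adj_lt {c : α} (g : α → ℕ) (hc : g c = 0)
    (hlip : ∀ ⦃x y⦄, G.Adj x y → g x ≤ g y + 1)
    (hdesc : ∀ x, x ≠ c → ∃ y, G.Adj x y ∧ g y < g x) (v : α) :
    G.dist v c = g v := by
  have walk : ∀ v, ∃ p : G.Walk v c, p.length ≤ g v := by
    intro v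
    induction hk : g v using Nat.strong_induction_on generalizing v with
    | _ k ih =>
      by_cases hv : v = c
      · subst hv
        exact ⟨.nil, Nat.zero_le _⟩
      · obtain ⟨y, hvy, hy⟩ := hdesc v hv
        obtain ⟨p, hp⟩ := ih (g y) (hk ▸ hy) y rfl
        exact ⟨.cons hvy p, by rw [Walk.length_cons]; omega⟩
  obtain ⟨p, hp⟩ := walk v
  obtain ⟨q, hq⟩ := p.reachable.exists_walk_length_eq_dist
  have := q.le_add_length hlip
  have := dist_le p
  omega

lemma dist_le_dist_add_one_of_eq_or_adj {x y : α} (h : x = y ∨ G.Adj x y) (c : α) :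
    G.dist x c ≤ G.dist y c + 1 := by
  rcases h with rfl | h
  · omega
  · rw [dist_comm, dist_comm (u := y)]
    have := h.symm.diff_dist_adj (u := c)
    omega

lemma Preconnected.exists_eq_or_adj_dist_eq_sub_one (hG : G.Preconnected) (x c : α) :
    ∃ y, (x = y ∨ G.Adj x y) ∧ G.dist y c = G.dist x c - 1 := by
  obtain ⟨p, hp⟩ := (hG x c).exists_walk_length_eq_dist
  cases p with
  | nil => exact ⟨x, Or.inl rfl, by simp⟩
  | cons hxy q =>
    refine ⟨_, Or.inr hxy, ?_⟩
    have := dist_le q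
    have := dist_le_dist_add_one_of_eq_or_adj (Or.inr hxy) c
    rw [Walk.length_cons] at hp
    omega

lemma strongProd_dist (hG : G.Preconnected) (hH : H.Preconnected) (u v : α × β) :
    (strongProd G H).dist u v = max (G.dist u.1 v.1) (H.dist u.2 v.2) := by
  refine dist_eq_of_lipschitz_of_exists_adj_lt (c := v)
    (fun x => max (G.dist x.1 v.1) (H.dist x.2 v.2)) (by simp) ?_ ?_ u
  · rintro x y ⟨-, h1, h2⟩
    have := dist_le_dist_add_one_of_eq_or_adj h1 v.1
    have := dist_le_dist_add_one_of_eq_or_adj h2 v.2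
    omega
  · intro x hx
    have hpos : 0 < max (G.dist x.1 v.1) (H.dist x.2 v.2) := by
      by_contra! h0
      have h1 := ((hG x.1 v.1).dist_eq_zero_iff).1 (by omega)
      have h2 := ((hH x.2 v.2).dist_eq_zero_iff).1 (by omega)
      exact hx (Prod.ext h1 h2)
    obtain ⟨a, ha, hda⟩ := hG.exists_eq_or_adj_dist_eq_sub_one x.1 v.1
    obtain ⟨b, hb, hdb⟩ := hH.exists_eq_or_adj_dist_eq_sub_one x.2 v.2
    refine ⟨(a, b), ⟨?_, ha, hb⟩, ?_⟩
    · simp only [Ne, Prod.ext_iff]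
      rintro ⟨rfl, rfl⟩
      omega
    · dsimp only
      omega

lemma pathGraph_dist {n : ℕ} (u v : Fin n) : (pathGraph n).dist u v = Nat.dist u v := by
  refine dist_eq_of_lipschitz_of_exists_adj_lt (fun x : Fin n => Nat.dist x v) (by simp) ?_ ?_ u
  · intro x y hxy
    rw [pathGraph_adj] at hxy
    unfold Nat.dist
    omega
  · intro x hx
    have hx' : (x : ℕ) ≠ v := Fin.val_ne_of_ne hx
    have hv := v.isLt
    unfold Nat.dist
    rcases Nat.lt_or_gt_of_ne hx' with hlt | hgt
    · exact ⟨⟨x + 1, by omega⟩, pathGraph_adj.2 (Or.inl rfl), by dsimp only; omega⟩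
    · exact ⟨⟨x - 1, by omega⟩, pathGraph_adj.2 (Or.inr (by dsimp only; omega)), by
        dsimp only; omega⟩

lemma _root_.Fin.val_sub_add_eq_or {n : ℕ} (a b : Fin n) :
    (a - b : Fin n).val + b = a ∨ (a - b : Fin n).val + b = a + n := by
  rcases le_or_gt b a with hba | hab
  · rw [Fin.sub_val_of_le hba]
    have : (b : ℕ) ≤ a := hba
    omega
  · rw [Fin.coe_sub_iff_lt.2 hab]
    have : (a : ℕ) < b := hab
    omega

lemma cycleGraph_adj_iff_val {n : ℕ} (hn : 2 ≤ n) {u v : Fin n} :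
    (cycleGraph n).Adj u v ↔
      u.val + 1 = v ∨ v.val + 1 = u ∨ u.val + 1 = v + n ∨ v.val + 1 = u + n := by
  rw [cycleGraph_adj']
  have := Fin.val_sub_add_eq_or u v
  have := Fin.val_sub_add_eq_or v u
  have := (u - v).isLt
  have := (v - u).isLt
  omega

lemma cycleGraph_dist {n : ℕ} (u v : Fin n) :
    (cycleGraph n).dist u v = min (Nat.dist u v) (n - Nat.dist u v) := by
  rcases Nat.lt_or_ge n 2 with hn | hn
  · obtain rfl : u = v := Fin.ext (by omega)
    simp
  refine dist_eq_of_lipschitz_of_exists_adj_lt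
    (fun x : Fin n => min (Nat.dist x v) (n - Nat.dist x v)) (by simp) ?_ ?_ u
  · intro x y hxy
    rw [cycleGraph_adj_iff_val hn] at hxy
    unfold Nat.dist
    omega
  · intro x hx
    have hx' : (x : ℕ) ≠ v := Fin.val_ne_of_ne hx
    have hv := v.isLt
    have hxn := x.isLt
    by_contra! H
    have H' : ∀ k, k < n → (x.val + 1 = k ∨ k + 1 = x.val ∨ x.val + 1 = k + n ∨
        k + 1 = x.val + n) → min (Nat.dist x v) (n - Nat.dist x v) ≤
          min (Nat.dist k v) (n - Nat.dist k v) :=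
      fun k hk hadj => H ⟨k, hk⟩ ((cycleGraph_adj_iff_val hn).2 hadj)
    obtain ⟨s, hs, es⟩ : ∃ k < n, k = x + 1 ∨ k + n = x + 1 :=
      if h : x + 1 < n then ⟨_, h, Or.inl rfl⟩ else ⟨0, by omega, Or.inr (by omega)⟩
    obtain ⟨p, hp, ep⟩ : ∃ k < n, k + 1 = x ∨ k + 1 = x + n :=
      if h : 0 < x.val then ⟨x - 1, by omega, Or.inl (by omega)⟩
      else ⟨n - 1, by omega, Or.inr (by omega)⟩
    have := H' s hs (by omega)
    have := H' p hp (by omega)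
    unfold Nat.dist at *
    omega

lemma cycleGraph_exists_dist_eq_half_and_lt {n : ℕ} {b d : Fin n} (hbd : b ≠ d) :
    ∃ j, (cycleGraph n).dist b j = n / 2 ∧ (cycleGraph n).dist d j < n / 2 := by
  have hbd' : (b : ℕ) ≠ d := Fin.val_ne_of_ne hbd
  have hb := b.isLt
  have hd := d.isLt
  by_contra! H
  have H' : ∀ k, k < n → min (Nat.dist b k) (n - Nat.dist b k) = n / 2 →
      n / 2 ≤ min (Nat.dist d k) (n - Nat.dist d k) := fun k hk => by
    simpa only [cycleGraph_dist] using H ⟨k, hk⟩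
  -- `d` cannot be at distance `n / 2` from both antipodes `b ± n / 2` of `b` unless `d = b`.
  obtain ⟨k₁, hk₁, e₁⟩ : ∃ k < n, k = b + n / 2 ∨ k + n = b + n / 2 :=
    if h : b + n / 2 < n then ⟨_, h, Or.inl rfl⟩ else ⟨b + n / 2 - n, by omega, Or.inr (by omega)⟩
  obtain ⟨k₂, hk₂, e₂⟩ : ∃ k < n, k + n / 2 = b ∨ k + n / 2 = b + n :=
    if h : n / 2 ≤ b then ⟨b - n / 2, by omega, Or.inl (by omega)⟩
    else ⟨b + n - n / 2, by omega, Or.inr (by omega)⟩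
  have := H' k₁ hk₁ (by unfold Nat.dist; omega)
  have := H' k₂ hk₂ (by unfold Nat.dist; omega)
  unfold Nat.dist at *
  omega

end SimpleGraph

lemma metricDim_le_ncard {α : Type*} {G : SimpleGraph α} {S : Set α} (hS : IsMetricGen G S) :
    metricDim G ≤ S.ncard :=
  Nat.sInf_le ⟨S, hS, rfl⟩

lemma isMetricGen_strongProd_range_prodMk {α β : Type*} {G : SimpleGraph α} {H : SimpleGraph β}
    (hG : G.Preconnected) (hH : H.Preconnected) {a₀ : α} {D : ℕ}
    (hinj : Function.Injective (G.dist · a₀)) (hlt : ∀ a, G.dist a a₀ < D)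
    (hres : ∀ b d : β, b ≠ d → ∃ j, H.dist b j = D ∧ H.dist d j < D) :
    IsMetricGen (strongProd G H) (Set.range (Prod.mk a₀)) := by
  rintro ⟨a, b⟩ ⟨c, d⟩ hne
  simp only [Set.exists_range_iff, strongProd_dist hG hH]
  by_cases hbd : b = d
  · subst hbd
    have hac : a ≠ c := by rintro rfl; exact hne rfl
    exact ⟨b, by simpa using hinj.ne hac⟩
  · obtain ⟨j, hbj, hdj⟩ := hres b d hbd
    have := hlt a
    have := hlt c
    exact ⟨j, by omega⟩

theorem stmt_5_general (n1 n2 : ℕ) (h1 : 2 ≤ n1)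
    (h : n1 - 1 < n2 / 2) :
    metricDim (strongProd (SimpleGraph.pathGraph n1) (SimpleGraph.cycleGraph n2)) ≤ n2 := by
  obtain ⟨m, rfl⟩ : ∃ m, n1 = m + 1 := ⟨n1 - 1, by omega⟩
  have hdist₀ (a : Fin (m + 1)) : (pathGraph (m + 1)).dist a 0 = a := by
    rw [pathGraph_dist, Fin.val_zero, Nat.dist_zero_right]
  have hgen := isMetricGen_strongProd_range_prodMk (pathGraph_preconnected (m + 1))
    cycleGraph_preconnected (a₀ := 0) (D := n2 / 2)
    (fun a c hac => Fin.ext (by simpa only [hdist₀] using hac))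
    (fun a => by have := a.isLt; rw [hdist₀]; omega)
    (fun _ _ hbd => cycleGraph_exists_dist_eq_half_and_lt hbd)
  calc _ ≤ _ := metricDim_le_ncard hgen
    _ = n2 := by rw [Set.ncard_range_of_injective (Prod.mk_right_injective _), Nat.card_fin]

theorem stmt_5 (n1 n2 : ℕ) (h1 : 2 ≤ n1) (h2 : 4 ≤ n2)
    (h : n1 - 1 < n2 / 2) :
    metricDim (strongProd (SimpleGraph.pathGraph n1) (SimpleGraph.cycleGraph n2)) ≤ n2 :=
  stmt_5_general n1 n2 h1 h
end

section
/- Let G and H be nontrivial connected graphs of orders n1 and n2 having t1 and t2 true twin equivalence classes, respectively. Then dim(G ⊠ H) ≥ n1·n2 − t1·t2. -/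
open SimpleGraph

/-!
Two distinct true twins `u, v` of a connected graph are at the same distance from every other
vertex, since a geodesic leaving `v` can equally well leave `u`. So every metric generator
contains one of them, its complement meets each twin class at most once, and
`dim G ≥ n - t`. Closed neighbourhoods in `G ⊠ H` are products of closed neighbourhoods,
so `G ⊠ H` has at most `t₁ t₂` twin classes on its `n₁ n₂` vertices.
-/

section TwinBound

variable {α β : Type*}

def closedNbhd (G : SimpleGraph α) (v : α) : Set α := insert v (G.neighborSet v)

theorem numTrueTwinClasses_eq_ncard_range (G : SimpleGraph α) :
    numTrueTwinClasses G = (Set.range (closedNbhd G)).ncard :=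
  (Nat.card_congr (Setoid.quotientKerEquivRange (closedNbhd G))).trans
    (Nat.card_coe_set_eq _)

theorem TrueTwins.dist_le {G : SimpleGraph α} (hG : G.Connected) {u v s : α}
    (h : TrueTwins G u v) (hs : s ≠ v) : G.dist u s ≤ G.dist v s := by
  obtain ⟨p, hp⟩ := hG.exists_walk_length_eq_dist v s
  cases p with
  | nil => exact absurd rfl hs
  | @cons _ w _ hvw q =>
    have hw : w ∈ insert u (G.neighborSet u) := h ▸ Set.mem_insert_of_mem v hvw
    have huw : G.dist u w ≤ 1 := by
      rcases hw with rfl | huw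
      · simp
      · exact (dist_eq_one_iff_adj.mpr huw).le
    calc G.dist u s ≤ G.dist u w + G.dist w s := hG.dist_triangle
      _ ≤ 1 + q.length := add_le_add huw (SimpleGraph.dist_le q)
      _ = G.dist v s := by rw [← hp, Walk.length_cons, add_comm]

theorem TrueTwins.dist_eq {G : SimpleGraph α} (hG : G.Connected) {u v s : α}
    (h : TrueTwins G u v) (hsu : s ≠ u) (hsv : s ≠ v) : G.dist u s = G.dist v s :=
  le_antisymm (h.dist_le hG hsv) (TrueTwins.dist_le hG h.symm hsu)

theorem IsMetricGen.mem_or_mem_of_trueTwins {G : SimpleGraph α} (hG : G.Connected)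
    {S : Set α} (hS : IsMetricGen G S) {u v : α} (huv : u ≠ v) (h : TrueTwins G u v) :
    u ∈ S ∨ v ∈ S := by
  by_contra! hout
  obtain ⟨s, hs, hdist⟩ := hS u v huv
  exact hdist (h.dist_eq hG (ne_of_mem_of_not_mem hs hout.1)
    (ne_of_mem_of_not_mem hs hout.2))

theorem IsMetricGen.injOn_closedNbhd_compl {G : SimpleGraph α} (hG : G.Connected)
    {S : Set α} (hS : IsMetricGen G S) : Set.InjOn (closedNbhd G) Sᶜ :=
  fun _ hu _ hv h => by_contra fun huv => (hS.mem_or_mem_of_trueTwins hG huv h).elim hu hv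

theorem IsMetricGen.ncard_compl_le [Finite α] {G : SimpleGraph α} (hG : G.Connected)
    {S : Set α} (hS : IsMetricGen G S) : Sᶜ.ncard ≤ numTrueTwinClasses G :=
  calc Sᶜ.ncard = (closedNbhd G '' Sᶜ).ncard := ((hS.injOn_closedNbhd_compl hG).ncard_image).symm
    _ ≤ (Set.range (closedNbhd G)).ncard := Set.ncard_le_ncard (Set.image_subset_range _ _)
    _ = numTrueTwinClasses G := (numTrueTwinClasses_eq_ncard_range G).symm

theorem isMetricGen_univ {G : SimpleGraph α} (hG : G.Connected) : IsMetricGen G Set.univ :=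
  fun x y hxy => ⟨x, Set.mem_univ x, by
    rw [dist_self, ne_comm, Ne, hG.dist_eq_zero_iff]; exact hxy.symm⟩

theorem card_sub_numTrueTwinClasses_le_metricDim [Fintype α] {G : SimpleGraph α}
    (hG : G.Connected) : Fintype.card α - numTrueTwinClasses G ≤ metricDim G := by
  refine le_csInf ⟨_, Set.univ, isMetricGen_univ hG, rfl⟩ ?_
  rintro _ ⟨S, hS, rfl⟩
  have hsplit : S.ncard + Sᶜ.ncard = Fintype.card α := by
    rw [Set.ncard_add_ncard_compl, Nat.card_eq_fintype_card]
  have := hS.ncard_compl_le hG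
  omega

theorem closedNbhd_strongProd (G : SimpleGraph α) (H : SimpleGraph β) (p : α × β) :
    closedNbhd (strongProd G H) p = closedNbhd G p.1 ×ˢ closedNbhd H p.2 := by
  obtain ⟨a, b⟩ := p
  ext ⟨c, d⟩
  simp only [closedNbhd, Set.mem_insert_iff, mem_neighborSet, Set.mem_prod, Prod.mk.injEq,
    strongProd, ne_eq]
  constructor
  · rintro (⟨rfl, rfl⟩ | ⟨-, h1, h2⟩)
    · exact ⟨Or.inl rfl, Or.inl rfl⟩
    · exact ⟨h1.imp Eq.symm id, h2.imp Eq.symm id⟩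
  · rintro ⟨h1, h2⟩
    by_cases he : c = a ∧ d = b
    · exact Or.inl he
    · exact Or.inr ⟨fun h => he ⟨h.1.symm, h.2.symm⟩, h1.imp Eq.symm id, h2.imp Eq.symm id⟩

theorem numTrueTwinClasses_strongProd_le [Finite α] [Finite β] (G : SimpleGraph α)
    (H : SimpleGraph β) :
    numTrueTwinClasses (strongProd G H) ≤ numTrueTwinClasses G * numTrueTwinClasses H := by
  have hrange : Set.range (closedNbhd (strongProd G H)) ⊆
      (fun A => A.1 ×ˢ A.2) '' (Set.range (closedNbhd G) ×ˢ Set.range (closedNbhd H)) := by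
    rintro _ ⟨p, rfl⟩
    exact ⟨(closedNbhd G p.1, closedNbhd H p.2), ⟨Set.mem_range_self p.1, Set.mem_range_self p.2⟩,
      (closedNbhd_strongProd G H p).symm⟩
  simp only [numTrueTwinClasses_eq_ncard_range, ← Set.ncard_prod]
  exact (Set.ncard_le_ncard hrange (Set.toFinite _)).trans (Set.ncard_image_le (Set.toFinite _))

theorem boxProd_le_strongProd (G : SimpleGraph α) (H : SimpleGraph β) :
    boxProd G H ≤ strongProd G H := by
  rintro ⟨a, b⟩ ⟨c, d⟩ (⟨h, rfl⟩ | ⟨h, rfl⟩)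
  · exact ⟨fun e => h.ne (congrArg Prod.fst e), Or.inr h, Or.inl rfl⟩
  · exact ⟨fun e => h.ne (congrArg Prod.snd e), Or.inl rfl, Or.inr h⟩

theorem SimpleGraph.Connected.strongProd {G : SimpleGraph α} {H : SimpleGraph β} (hG : G.Connected)
    (hH : H.Connected) : (strongProd G H).Connected :=
  (hG.boxProd hH).mono (boxProd_le_strongProd G H)

end TwinBound

theorem stmt_8_general {α β : Type*} [Fintype α] [Fintype β]
    (G : SimpleGraph α) (H : SimpleGraph β) (hG : G.Connected) (hH : H.Connected) :
    Fintype.card α * Fintype.card β - numTrueTwinClasses G * numTrueTwinClasses H ≤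
      metricDim (strongProd G H) :=
  calc Fintype.card α * Fintype.card β - numTrueTwinClasses G * numTrueTwinClasses H
      ≤ Fintype.card (α × β) - numTrueTwinClasses (strongProd G H) := by
        rw [Fintype.card_prod]
        exact Nat.sub_le_sub_left (numTrueTwinClasses_strongProd_le G H) _
    _ ≤ metricDim (strongProd G H) := card_sub_numTrueTwinClasses_le_metricDim (hG.strongProd hH)

theorem stmt_8 {α β : Type*} [Fintype α] [Fintype β] [Nontrivial α] [Nontrivial β]
    (G : SimpleGraph α) (H : SimpleGraph β) (hG : G.Connected) (hH : H.Connected) :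
    Fintype.card α * Fintype.card β - numTrueTwinClasses G * numTrueTwinClasses H ≤
      metricDim (strongProd G H) :=
  stmt_8_general G H hG hH
end

section
/- For any tree T of order n2 ≥ 3 and any n1 ≥ 2, dim(K_{n1} ⊠ T) = n2·(n1 − 1). -/
open SimpleGraph

/-!
The product distance is `max (d_{K_n}) (d_T)`, so two vertices `(a, b)` and `(a', b)` of the same
`T`-fibre are at the same distance from every third vertex: a metric generator can leave out at
most one vertex of each fibre, whence `dim ≥ n₂ (n₁ - 1)`. Conversely, all vertices outside one
copy `{z} × T` form a generator: a pair inside a fibre is split by whichever of the two lies in it,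
a pair in non-adjacent fibres `b, d` by `(o, d)`, and a pair in adjacent fibres `b, d` by `(o, f)`
for any third vertex `f`, since adjacent vertices of a tree have distinct distances to `f`.
-/

section StrongProduct

variable {α β : Type*} {G : SimpleGraph α} {H : SimpleGraph β}

lemma strongProd_adj_of_adj {a a' : α} {b b' : β} (ha : G.Adj a a') (hb : H.Adj b b') :
    (strongProd G H).Adj (a, b) (a', b') :=
  ⟨by simp [ha.ne], Or.inr ha, Or.inr hb⟩

@[simps]
def strongProdLeft (H : SimpleGraph β) (b : β) : G →g strongProd G H where
  toFun a := (a, b)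
  map_rel' h := ⟨by simp [h.ne], Or.inr h, Or.inl rfl⟩

@[simps]
def strongProdRight (G : SimpleGraph α) (a : α) : H →g strongProd G H where
  toFun b := (a, b)
  map_rel' h := ⟨by simp [h.ne], Or.inl rfl, Or.inr h⟩

lemma exists_walk_strongProd {a c : α} {b d : β} (p : G.Walk a c) (q : H.Walk b d) :
    ∃ w : (strongProd G H).Walk (a, b) (c, d), w.length = max p.length q.length := by
  induction p generalizing b with
  | nil =>
    exact ⟨(q.map (strongProdRight G _)).copy (strongProdRight_apply ..) (strongProdRight_apply ..),
      by simp⟩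
  | cons hp p ih =>
    cases q with
    | nil =>
      exact ⟨((Walk.cons hp p).map (strongProdLeft H _)).copy (strongProdLeft_apply ..)
        (strongProdLeft_apply ..), by simp⟩
    | cons hq q =>
      obtain ⟨w, hw⟩ := ih q
      exact ⟨Walk.cons (strongProd_adj_of_adj hp hq) w, by simp [hw]⟩

lemma SimpleGraph.Walk.exists_length_le_of_adj_imp {V W : Type*} {G : SimpleGraph V}
    {H : SimpleGraph W} (f : V → W) (hf : ∀ ⦃x y⦄, G.Adj x y → f x = f y ∨ H.Adj (f x) (f y))
    {u v : V} (p : G.Walk u v) : ∃ q : H.Walk (f u) (f v), q.length ≤ p.length := by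
  induction p with
  | nil => exact ⟨Walk.nil, le_rfl⟩
  | cons h p ih =>
    obtain ⟨q, hq⟩ := ih
    rcases hf h with heq | hadj
    · exact ⟨q.copy heq.symm rfl, by simp; omega⟩
    · exact ⟨Walk.cons hadj q, by simpa using hq⟩

lemma dist_strongProd (hG : G.Preconnected) (hH : H.Preconnected) (x y : α × β) :
    (strongProd G H).dist x y = max (G.dist x.1 y.1) (H.dist x.2 y.2) := by
  obtain ⟨p, hp⟩ := (hG x.1 y.1).exists_walk_length_eq_dist
  obtain ⟨q, hq⟩ := (hH x.2 y.2).exists_walk_length_eq_dist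
  obtain ⟨w, hw⟩ := exists_walk_strongProd p q
  refine le_antisymm (hp ▸ hq ▸ hw ▸ dist_le w) ?_
  obtain ⟨m, hm⟩ := Reachable.exists_walk_length_eq_dist ⟨w⟩
  obtain ⟨m₁, hm₁⟩ := m.exists_length_le_of_adj_imp Prod.fst
    fun _ _ (h : (strongProd G H).Adj _ _) => h.2.1
  obtain ⟨m₂, hm₂⟩ := m.exists_length_le_of_adj_imp Prod.snd
    fun _ _ (h : (strongProd G H).Adj _ _) => h.2.2
  exact max_le (hm ▸ (dist_le m₁).trans hm₁) (hm ▸ (dist_le m₂).trans hm₂)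

end StrongProduct

section CompleteStrongProduct

variable {α β : Type*} {T : SimpleGraph β}

lemma dist_top_strongProd_of_ne (hT : T.Preconnected) {x y : α × β} (hxy : x ≠ y) :
    (strongProd (⊤ : SimpleGraph α) T).dist x y = max 1 (T.dist x.2 y.2) := by
  rw [dist_strongProd preconnected_top hT]
  by_cases h₁ : x.1 = y.1
  · have h₂ : 0 < T.dist x.2 y.2 := (hT _ _).pos_dist_of_ne fun h₂ => hxy (Prod.ext h₁ h₂)
    rw [h₁, SimpleGraph.dist_self]
    omega
  · rw [dist_top_of_ne h₁]

lemma IsMetricGen.injOn_snd_compl (hT : T.Preconnected) {S : Set (α × β)}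
    (hS : IsMetricGen (strongProd (⊤ : SimpleGraph α) T) S) : Set.InjOn Prod.snd Sᶜ := by
  rintro ⟨a, b⟩ hx ⟨a', b'⟩ hy (rfl : b = b')
  by_contra hne
  obtain ⟨s, hs, hd⟩ := hS _ _ hne
  rw [dist_top_strongProd_of_ne hT (ne_of_mem_of_not_mem hs hx).symm,
    dist_top_strongProd_of_ne hT (ne_of_mem_of_not_mem hs hy).symm] at hd
  exact hd rfl

lemma IsMetricGen.card_mul_le_ncard [Fintype α] [Fintype β] (hT : T.Preconnected)
    {S : Set (α × β)} (hS : IsMetricGen (strongProd (⊤ : SimpleGraph α) T) S) :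
    Fintype.card β * (Fintype.card α - 1) ≤ S.ncard := by
  have hcompl : Sᶜ.ncard ≤ Fintype.card β := by
    simpa using Set.ncard_le_ncard_of_injOn Prod.snd (fun x _ => Set.mem_univ x)
      (hS.injOn_snd_compl hT) Set.finite_univ
  have hsum : S.ncard + Sᶜ.ncard = Fintype.card α * Fintype.card β := by
    rw [Set.ncard_add_ncard_compl, Nat.card_eq_fintype_card, Fintype.card_prod]
  rw [Nat.mul_sub_one, Nat.mul_comm]
  omega

lemma isMetricGen_top_strongProd [Nontrivial α] (hT : T.IsTree) (hβ : 3 ≤ ENat.card β) (z : α) :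
    IsMetricGen (strongProd (⊤ : SimpleGraph α) T) (({z}ᶜ : Set α) ×ˢ Set.univ) := by
  obtain ⟨o, hoz⟩ := exists_ne z
  have hpre := hT.connected.preconnected
  rintro ⟨a, b⟩ ⟨c, d⟩ hxy
  rcases eq_or_ne b d with rfl | hbd
  · have hac : a ≠ c := by rintro rfl; exact hxy rfl
    by_cases ha : a = z
    · refine ⟨(c, b), by simp [← ha, hac.symm], ?_⟩
      rw [dist_top_strongProd_of_ne hpre (by simp [hac]), SimpleGraph.dist_self]
      simp
    · refine ⟨(a, b), by simp [ha], ?_⟩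
      rw [dist_top_strongProd_of_ne hpre (by simp [hac.symm] : (c, b) ≠ (a, b)),
        SimpleGraph.dist_self]
      simp
  by_cases hadj : T.Adj b d
  · obtain ⟨f, hfb, hfd⟩ := ENat.exists_ne_ne_of_three_le hβ b d
    refine ⟨(o, f), by simp [hoz], ?_⟩
    rw [dist_top_strongProd_of_ne hpre (by simp [hfb.symm] : (a, b) ≠ (o, f)),
      dist_top_strongProd_of_ne hpre (by simp [hfd.symm] : (c, d) ≠ (o, f))]
    have hne : T.dist b f ≠ T.dist d f := by
      simpa [SimpleGraph.dist_comm] using hT.dist_ne_of_adj f hadj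
    have hbf := (hpre b f).pos_dist_of_ne hfb.symm
    have hdf := (hpre d f).pos_dist_of_ne hfd.symm
    dsimp only
    omega
  · refine ⟨(o, d), by simp [hoz], ?_⟩
    have hbd₁ : 0 < T.dist b d := (hpre b d).pos_dist_of_ne hbd
    have hbd₂ : T.dist b d ≠ 1 := fun h => hadj (dist_eq_one_iff_adj.1 h)
    have hcd : (strongProd (⊤ : SimpleGraph α) T).dist (c, d) (o, d) ≤ 1 := by
      rcases eq_or_ne c o with rfl | hco
      · simp
      · simp [dist_top_strongProd_of_ne hpre (by simp [hco] : (c, d) ≠ (o, d))]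
    rw [dist_top_strongProd_of_ne hpre (by simp [hbd] : (a, b) ≠ (o, d))]
    dsimp only
    omega

end CompleteStrongProduct

lemma metricDim_eq_of_isMetricGen {V : Type*} {G : SimpleGraph V} {S : Set V} {k : ℕ}
    (hS : IsMetricGen G S) (hk : S.ncard = k) (hmin : ∀ S', IsMetricGen G S' → k ≤ S'.ncard) :
    metricDim G = k :=
  le_antisymm (Nat.sInf_le ⟨S, hS, hk⟩)
    (le_csInf ⟨k, S, hS, hk⟩ fun _ ⟨S', hS', h⟩ => h ▸ hmin S' hS')

theorem stmt_15 {β : Type*} [Fintype β] (T : SimpleGraph β) (n1 : ℕ)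
    (hT : T.IsTree) (hcard : 3 ≤ Fintype.card β) (hn1 : 2 ≤ n1) :
    metricDim (strongProd (⊤ : SimpleGraph (Fin n1)) T) =
      Fintype.card β * (n1 - 1) := by
  have : Nontrivial (Fin n1) := Fin.nontrivial_iff_two_le.2 hn1
  have hβ : 3 ≤ ENat.card β := by simpa [ENat.card_eq_coe_fintype_card] using hcard
  refine metricDim_eq_of_isMetricGen (isMetricGen_top_strongProd hT hβ ⟨0, by omega⟩) ?_
    fun S hS => by simpa using hS.card_mul_le_ncard hT.connected.preconnected
  rw [Set.ncard_prod, Set.ncard_univ, Set.ncard_compl]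
  simp [Nat.mul_comm]
end
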